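/- arXiv:1311.6919 — 8 statements merged into one kernel-verified Lean document; each statement's English description precedes it below -/
import Mathlib

section
/- Let A ⊆ B be rings and let v be an A-valuation on B with kernel p and valuation ring R_v ⊆ k(p). Then v is unbounded if and only if the canonical ring homomorphism B ⊗_A R_v → k(p), sending b ⊗ r to the product of the residue class of b with r, is surjective. -/
/-!
The units of the value group dominated by some value `v b` form a monoid, and the value
group is generated by the values of `v`; so `v` is unbounded iff every `(v b)⁻¹` is dominated.
Writing elements of `k(p)` as fractions `φ c / φ d`, this says that every `x ∈ k(p)` has
`v̄ x ≤ v b` for some `b`, i.e. `x = φ b * (x / φ b)` with `x / φ b ∈ R_v`. Conversely, by the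
ultrametric inequality a sum `∑ φ (c i) * r i` with `r i ∈ R_v` is dominated by some `v (c i)`.
-/

/-- A valuation `v` on `B` is *unbounded* (with respect to the subgroup of the value
group generated by its nonzero values, which is the value group in the paper's
convention) if no element of that subgroup strictly bounds all values of `v`. -/
def ValUnbounded {B : Type*} [CommRing B] {Γ : Type*} [LinearOrderedCommGroupWithZero Γ]
    (v : Valuation B Γ) : Prop :=
  ∀ γ ∈ Subgroup.closure {g : Γˣ | (g : Γ) ∈ Set.range v}, ∃ b : B, (γ : Γ) ≤ v b

section Dominated

variable {B : Type*} [CommRing B] {Γ : Type*} [LinearOrderedCommGroupWithZero Γ]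

def Valuation.dominatedUnits (v : Valuation B Γ) : Submonoid Γˣ where
  carrier := {g | ∃ b, (g : Γ) ≤ v b}
  one_mem' := ⟨1, v.map_one.ge⟩
  mul_mem' := by
    rintro g h ⟨b, hb⟩ ⟨c, hc⟩
    exact ⟨b * c, by rw [Units.val_mul, v.map_mul]; exact mul_le_mul' hb hc⟩

theorem valUnbounded_iff_forall_exists_inv_le (v : Valuation B Γ) :
    ValUnbounded v ↔ ∀ b, v b ≠ 0 → ∃ b', (v b)⁻¹ ≤ v b' := by
  change (Subgroup.closure _).toSubmonoid ≤ v.dominatedUnits ↔ _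
  rw [Subgroup.closure_toSubmonoid, Submonoid.closure_le, Set.union_subset_iff]
  have generators_dominated : {g : Γˣ | (g : Γ) ∈ Set.range v} ⊆ v.dominatedUnits := by
    rintro g ⟨b, hb⟩
    exact ⟨b, hb.ge⟩
  simp only [generators_dominated, true_and]
  constructor
  · intro h b hb
    obtain ⟨b', hb'⟩ := h (show (Units.mk0 _ hb)⁻¹ ∈ _ from ⟨b, by simp⟩)
    exact ⟨b', by simpa using hb'⟩
  · rintro h g ⟨b, hb⟩
    obtain ⟨b', hb'⟩ := h b (by rw [hb]; exact Units.ne_zero _)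
    exact ⟨b', by simpa [hb] using hb'⟩

end Dominated

section Residue

variable {B K : Type*} [CommRing B] [Field K] {Γ : Type*} [LinearOrderedCommGroupWithZero Γ]
  {φ : B →+* K} {vb : Valuation K Γ}

theorem valUnbounded_comap_iff (hres : ∀ x : K, ∃ c d : B, φ d ≠ 0 ∧ x * φ d = φ c) :
    ValUnbounded (vb.comap φ) ↔ ∀ x : K, ∃ b, vb x ≤ vb (φ b) := by
  rw [valUnbounded_iff_forall_exists_inv_le]
  constructor
  · intro h x
    obtain ⟨c, d, hd, hcd⟩ := hres x
    obtain ⟨b, hb⟩ := h d ((vb.ne_zero_iff).2 hd)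
    refine ⟨c * b, ?_⟩
    have hx : vb x = vb (φ c) * (vb (φ d))⁻¹ := by
      rw [eq_mul_inv_iff_mul_eq₀ ((vb.ne_zero_iff).2 hd), ← map_mul, hcd]
    rw [hx, map_mul, map_mul]
    exact mul_le_mul_right hb _
  · intro h b _
    simpa using h (φ b)⁻¹

theorem forall_exists_le_iff_forall_eq_sum :
    (∀ x : K, ∃ b, vb x ≤ vb (φ b)) ↔
      ∀ x : K, ∃ (m : ℕ) (c : Fin m → B) (r : Fin m → K),
        (∀ i, r i ∈ vb.integer) ∧ x = ∑ i, φ (c i) * r i := by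
  constructor
  · intro h x
    obtain ⟨b, hb⟩ := h x
    by_cases hφb : φ b = 0
    · have hx : x = 0 := by simpa [hφb] using hb
      exact ⟨0, ![], ![], fun i => i.elim0, by simp [hx]⟩
    · refine ⟨1, ![b], ![x / φ b], fun i => ?_, by simp [mul_div_cancel₀ x hφb]⟩
      fin_cases i
      exact (map_div₀ vb _ _).trans_le (div_le_one_of_le₀ hb zero_le)
  · intro h x
    obtain ⟨m, c, r, hr, rfl⟩ := h x
    by_contra! hlt
    refine (vb.map_sum_lt' (zero_le.trans_lt (hlt 0)) (fun i _ => ?_)).false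
    calc vb (φ (c i) * r i) = vb (φ (c i)) * vb (r i) := map_mul _ _ _
      _ ≤ vb (φ (c i)) := mul_le_of_le_one_right' (hr i)
      _ < _ := hlt (c i)

end Residue

theorem stmt1_general {B K : Type*} [CommRing B] [Field K] {Γ : Type*}
    [LinearOrderedCommGroupWithZero Γ]
    (φ : B →+* K) (vb : Valuation K Γ)
    (hres : ∀ x : K, ∃ c d : B, φ d ≠ 0 ∧ x * φ d = φ c) :
    ValUnbounded (vb.comap φ) ↔
      ∀ x : K, ∃ (m : ℕ) (c : Fin m → B) (r : Fin m → K),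
        (∀ i, r i ∈ vb.integer) ∧ x = ∑ i, φ (c i) * r i :=
  (valUnbounded_comap_iff hres).trans forall_exists_le_iff_forall_eq_sum

/-- let `v` be an `A`-valuation on `B` with kernel `p` and valuation ring
`R_v ⊆ k(p)`.  Here `k(p)` is modelled by a field `K` together with a homomorphism
`φ : B → K` such that every element of `K` is a fraction `φ c / φ d` (`hres`), and the
induced valuation `v̄` on `K` is `vb`, so that `v = vb ∘ φ` and `R_v = vb.integer`.
Then `v` is unbounded iff the canonical map `B ⊗_A R_v → k(p)`, `b ⊗ r ↦ φ b * r`, is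
surjective, i.e. iff every element of `K` is a finite sum `∑ φ (c i) * r i` with
`r i ∈ R_v`. -/
theorem stmt1 {B K : Type*} [CommRing B] [Field K] {Γ : Type*}
    [LinearOrderedCommGroupWithZero Γ]
    (A : Subring B) (φ : B →+* K) (vb : Valuation K Γ)
    (hres : ∀ x : K, ∃ c d : B, φ d ≠ 0 ∧ x * φ d = φ c)
    (hA : ∀ a ∈ A, vb (φ a) ≤ 1) :
    ValUnbounded (vb.comap φ) ↔
      ∀ x : K, ∃ (m : ℕ) (c : Fin m → B) (r : Fin m → K),
        (∀ i, r i ∈ vb.integer) ∧ x = ∑ i, φ (c i) * r i :=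
  stmt1_general φ vb hres
end

section
/- Let A ⊆ B be rings and let v be an A-valuation on B with kernel p, valuation ring R_v ⊆ k(p), and semi-valuation ring S_v ⊆ B_p. Then v is unbounded if and only if the canonical ring homomorphism B ⊗_A S_v → k(p) is surjective. -/
theorem Valuation.exists_le_of_eq_sum_mul {R Γ ι : Type*} [CommRing R]
    [LinearOrderedCommGroupWithZero Γ] (v : Valuation R Γ) (s : Finset ι) (a r : ι → R)
    (hr : ∀ i ∈ s, v (r i) ≤ 1) (hx : v (∑ i ∈ s, a i * r i) ≠ 0) :
    ∃ j ∈ s, v (∑ i ∈ s, a i * r i) ≤ v (a j) := by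
  have hs : s.Nonempty := Finset.nonempty_iff_ne_empty.mpr fun h => hx (by simp [h])
  obtain ⟨j, hj, hmax⟩ := s.exists_max_image (fun i => v (a i)) hs
  refine ⟨j, hj, v.map_sum_le fun i hi => ?_⟩
  calc v (a i * r i) = v (a i) * v (r i) := v.map_mul _ _
    _ ≤ v (a i) * 1 := mul_le_mul_right (hr i hi) _
    _ = v (a i) := mul_one _
    _ ≤ v (a j) := hmax i hi

theorem Valuation.exists_eq_of_mem_closure_range {K Γ : Type*} [Field K]
    [LinearOrderedCommGroupWithZero Γ] (v : Valuation K Γ) {γ : Γˣ}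
    (hγ : γ ∈ Subgroup.closure {g : Γˣ | (g : Γ) ∈ Set.range v}) : ∃ x : K, v x = γ := by
  induction hγ using Subgroup.closure_induction with
  | mem g hg => exact hg
  | one => exact ⟨1, v.map_one⟩
  | mul g h _ _ hg hh =>
    obtain ⟨x, hx⟩ := hg
    obtain ⟨y, hy⟩ := hh
    exact ⟨x * y, by simp [hx, hy]⟩
  | inv g _ hg =>
    obtain ⟨x, hx⟩ := hg
    exact ⟨x⁻¹, by simp [hx]⟩

theorem ValUnbounded.exists_one_le_mul {B Γ : Type*} [CommRing B]
    [LinearOrderedCommGroupWithZero Γ] {v : Valuation B Γ} (hv : ValUnbounded v) {d : B}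
    (hd : v d ≠ 0) : ∃ b : B, 1 ≤ v (b * d) := by
  let u : Γˣ := Units.mk0 (v d) hd
  obtain ⟨b, hb⟩ := hv u⁻¹ (inv_mem (Subgroup.subset_closure ⟨d, rfl⟩))
  refine ⟨b, ?_⟩
  calc (1 : Γ) = (v d)⁻¹ * v d := (inv_mul_cancel₀ hd).symm
    _ ≤ v b * v d := mul_le_mul_left hb _
    _ = v (b * d) := (v.map_mul b d).symm

theorem IsLocalization.map_mk'_eq_div {B L K : Type*} [CommRing B] [CommRing L] [Field K]
    [Algebra B L] {M : Submonoid B} [IsLocalization M L] {φ : B →+* K} {ψ : L →+* K}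
    (hψ : ψ.comp (algebraMap B L) = φ) (x : B) (s : M) :
    ψ (IsLocalization.mk' L x s) = φ x / φ s := by
  have hs : IsUnit (φ s) := hψ ▸ (IsLocalization.map_units L s).map ψ
  rw [eq_div_iff hs.ne_zero, ← hψ, RingHom.comp_apply, RingHom.comp_apply, ← map_mul,
    IsLocalization.mk'_spec]

theorem stmt2_general {B K L : Type*} [CommRing B] [Field K] [CommRing L] {Γ : Type*}
    [LinearOrderedCommGroupWithZero Γ]
    (φ : B →+* K) (vb : Valuation K Γ)
    [hker : (RingHom.ker φ).IsPrime]
    [Algebra B L] [IsLocalization.AtPrime L (RingHom.ker φ)]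
    (ψ : L →+* K) (hψ : ψ.comp (algebraMap B L) = φ)
    (hres : ∀ x : K, ∃ c d : B, φ d ≠ 0 ∧ x * φ d = φ c) :
    ValUnbounded (vb.comap φ) ↔
      ∀ x : K, ∃ (m : ℕ) (c : Fin m → B) (s : Fin m → L),
        (∀ i, s i ∈ (vb.integer).comap ψ) ∧ x = ∑ i, φ (c i) * ψ (s i) := by
  constructor
  · intro hv x
    obtain ⟨c, d, hd, hx⟩ := hres x
    obtain ⟨b, hb⟩ := hv.exists_one_le_mul (d := d) (vb.ne_zero_iff.mpr hd)
    have hφbd : φ (b * d) ≠ 0 := vb.ne_zero_iff.mp (zero_lt_one.trans_le hb).ne'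
    have hbd : b * d ∈ (RingHom.ker φ).primeCompl := by
      rwa [Ideal.mem_primeCompl_iff, RingHom.mem_ker]
    have hinv := IsLocalization.map_mk'_eq_div (M := (RingHom.ker φ).primeCompl) hψ 1 ⟨b * d, hbd⟩
    rw [map_one, one_div] at hinv
    refine ⟨1, fun _ => c * b, fun _ => IsLocalization.mk' L 1 ⟨b * d, hbd⟩, fun _ => ?_, ?_⟩
    · rw [Subring.mem_comap, Valuation.mem_integer_iff, hinv, map_inv₀]
      exact inv_le_one_of_one_le₀ hb
    · rw [Fin.sum_univ_one, hinv, eq_mul_inv_iff_mul_eq₀ hφbd, map_mul, map_mul, ← hx]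
      ring
  · intro hs γ hγ
    have hγ' : γ ∈ Subgroup.closure {g : Γˣ | (g : Γ) ∈ Set.range vb} := by
      refine Subgroup.closure_mono ?_ hγ
      rintro _ ⟨b, hb⟩
      exact ⟨φ b, hb⟩
    obtain ⟨x, hx⟩ := vb.exists_eq_of_mem_closure_range hγ'
    obtain ⟨m, c, s, hsint, rfl⟩ := hs x
    obtain ⟨j, -, hj⟩ := vb.exists_le_of_eq_sum_mul Finset.univ (φ ∘ c) (ψ ∘ s)
      (fun i _ => hsint i) (hx ▸ γ.ne_zero)
    exact ⟨c j, hx ▸ hj⟩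

/-- let `v` be an `A`-valuation on `B` with kernel `p`, valuation ring
`R_v ⊆ k(p)` and semi-valuation ring `S_v ⊆ B_p`.  Here `k(p)` is modelled by a field
`K` with `φ : B → K` such that every element of `K` is a fraction of elements of `φ(B)`,
`v̄ = vb` is the induced valuation on `K` (so `v = vb ∘ φ` and `R_v = vb.integer`),
`B_p` is modelled by `L` (a localization of `B` at the prime `p = ker φ`) with
`ψ : L → K` the canonical map, and `S_v = ψ⁻¹(R_v)`.  Then `v` is unbounded iff the
canonical map `B ⊗_A S_v → k(p)`, `b ⊗ s ↦ φ b * ψ s`, is surjective, i.e. iff every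
element of `K` is a finite sum `∑ φ (c i) * ψ (s i)` with `s i ∈ S_v`. -/
theorem stmt2 {B K L : Type*} [CommRing B] [Field K] [CommRing L] {Γ : Type*}
    [LinearOrderedCommGroupWithZero Γ]
    (A : Subring B) (φ : B →+* K) (vb : Valuation K Γ)
    [hker : (RingHom.ker φ).IsPrime]
    [Algebra B L] [IsLocalization.AtPrime L (RingHom.ker φ)]
    (ψ : L →+* K) (hψ : ψ.comp (algebraMap B L) = φ)
    (hres : ∀ x : K, ∃ c d : B, φ d ≠ 0 ∧ x * φ d = φ c)
    (hA : ∀ a ∈ A, vb (φ a) ≤ 1) :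
    ValUnbounded (vb.comap φ) ↔
      ∀ x : K, ∃ (m : ℕ) (c : Fin m → B) (s : Fin m → L),
        (∀ i, s i ∈ (vb.integer).comap ψ) ∧ x = ∑ i, φ (c i) * ψ (s i) :=
  stmt2_general φ vb (hker := hker) ψ hψ hres
end

section
/- Let A ⊆ B and A' ⊆ B' be rings and let φ : B → B' be a ring homomorphism with φ(A) ⊆ A'. If the induced homomorphism B ⊗_A A' → B' is integral, then for every unbounded A'-valuation v on B', the pullback v ∘ φ is an unbounded A-valuation on B (unboundedness taken with respect to the subgroup of the value group generated by the nonzero values of v ∘ φ). -/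
/-- if `φ : B → B'` maps `A` into `A'` and the induced map
`B ⊗_A A' → B'` is integral (equivalently: every element of `B'` is integral over the
subring generated by `φ(B)` and `A'`, which is the image of `B ⊗_A A' → B'`), then the
pullback `v ∘ φ` of every unbounded `A'`-valuation `v` on `B'` is an unbounded
`A`-valuation on `B`, where unboundedness of `v ∘ φ` is taken with respect to the
subgroup of the value group generated by its nonzero values. -/
theorem stmt3 {B B' : Type*} [CommRing B] [CommRing B'] {Γ : Type*}
    [LinearOrderedCommGroupWithZero Γ]
    (A : Subring B) (A' : Subring B') (φ : B →+* B') (hAA' : ∀ a ∈ A, φ a ∈ A')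
    (hadic : ∀ x : B', IsIntegral (Subring.closure (Set.range φ ∪ (A' : Set B'))) x)
    (v : Valuation B' Γ) (hA' : ∀ a ∈ A', v a ≤ 1) (hunb : ValUnbounded v) :
    (∀ a ∈ A, (v.comap φ) a ≤ 1) ∧ ValUnbounded (v.comap φ) := by
  set R := Subring.closure (Set.range φ ∪ (A' : Set B')) with hRdef
  -- bound for elements of R
  have hR : ∀ r ∈ R, ∃ b : B, v r ≤ v (φ b) := by
    intro r hr
    induction hr using Subring.closure_induction with
    | mem r hr =>
      rcases hr with ⟨b, rfl⟩ | hr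
      · exact ⟨b, le_rfl⟩
      · exact ⟨1, by simpa using hA' r hr⟩
    | zero => exact ⟨1, by simp⟩
    | one => exact ⟨1, by simp⟩
    | add r s _ _ hr hs =>
      obtain ⟨b, hb⟩ := hr
      obtain ⟨c, hc⟩ := hs
      rcases le_total (v (φ b)) (v (φ c)) with h | h
      · exact ⟨c, le_trans (v.map_add_le (hb.trans h) hc) le_rfl⟩
      · exact ⟨b, le_trans (v.map_add_le hb (hc.trans h)) le_rfl⟩
    | neg r _ hr => simpa using hr
    | mul r s _ _ hr hs =>
      obtain ⟨b, hb⟩ := hr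
      obtain ⟨c, hc⟩ := hs
      exact ⟨b * c, by rw [map_mul, map_mul, map_mul]; exact mul_le_mul' hb hc⟩
  have key : ∀ x : B', ∃ b : B, v x ≤ v (φ b) := by
    intro x
    obtain ⟨p, hp, hpx⟩ := hadic x
    set q : Polynomial B' := p.map (algebraMap R B') with hq
    have hqm : q.Monic := hp.map _
    have hqx : q.eval x = 0 := by
      rw [hq, Polynomial.eval_map]; exact hpx
    set n := q.natDegree with hn
    -- uniform bound on coefficients
    have hcoeff : ∀ i, ∃ b : B, v (q.coeff i) ≤ v (φ b) := by
      intro i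
      apply hR
      rw [hq, Polynomial.coeff_map]
      exact SetLike.coe_mem (p.coeff i)
    have hbound : ∃ b : B, (1 : Γ) ≤ v (φ b) ∧ ∀ i ∈ Finset.range n, v (q.coeff i) ≤ v (φ b) := by
      induction (Finset.range n) using Finset.induction with
      | empty => exact ⟨1, by simp, by simp⟩
      | @insert j s hjs ih =>
        obtain ⟨b, hb1, hb⟩ := ih
        obtain ⟨c, hc⟩ := hcoeff j
        rcases le_total (v (φ c)) (v (φ b)) with h | h
        · exact ⟨b, hb1, by
            intro i hi
            rcases Finset.mem_insert.mp hi with rfl | hi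
            · exact hc.trans h
            · exact hb i hi⟩
        · exact ⟨c, hb1.trans h, by
            intro i hi
            rcases Finset.mem_insert.mp hi with rfl | hi
            · exact hc
            · exact (hb i hi).trans h⟩
    obtain ⟨b, hb1, hb⟩ := hbound
    refine ⟨b, ?_⟩
    by_contra hcon
    push_neg at hcon
    have hvx1 : (1 : Γ) < v x := lt_of_le_of_lt hb1 hcon
    have hvxne : v x ≠ 0 := by
      intro h
      rw [h] at hvx1
      exact (not_lt_of_ge zero_le_one) hvx1
    have hn1 : 1 ≤ n := by
      by_contra hn0
      push_neg at hn0
      interval_cases n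
      · have : q = 1 := hqm.natDegree_eq_zero.mp hn.symm
        rw [this] at hqx
        simp at hqx
        have : (1 : B') = 0 := by simpa using hqx
        have hsub : Subsingleton B' := subsingleton_of_zero_eq_one this.symm
        exact hcon.not_ge (le_of_eq (congrArg v (Subsingleton.elim x (φ b))))
    -- x^n = - sum
    have heval : (0 : B') = ∑ i ∈ Finset.range n, q.coeff i * x ^ i + x ^ n := by
      have := Polynomial.eval_eq_sum_range (x := x) (p := q)
      rw [Finset.sum_range_succ] at this
      rw [← hqx, this, Polynomial.Monic.coeff_natDegree hqm, one_mul]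
    have hxn : v (x ^ n) = v (∑ i ∈ Finset.range n, q.coeff i * x ^ i) := by
      have : x ^ n = -(∑ i ∈ Finset.range n, q.coeff i * x ^ i) := by linear_combination -heval
      rw [this, Valuation.map_neg]
    have hsum : v (∑ i ∈ Finset.range n, q.coeff i * x ^ i) ≤ v (φ b) * v x ^ (n - 1) := by
      apply Valuation.map_sum_le
      intro i hi
      rw [map_mul, map_pow]
      apply mul_le_mul' (hb i hi)
      apply pow_le_pow_right₀ (le_of_lt hvx1)
      have := Finset.mem_range.mp hi
      omega
    have hfin : v x * v x ^ (n - 1) ≤ v (φ b) * v x ^ (n - 1) := by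
      calc v x * v x ^ (n - 1) = v x ^ n := by
            rw [← pow_succ']
            congr 1
            omega
        _ = v (x ^ n) := (map_pow v x n).symm
        _ ≤ v (φ b) * v x ^ (n - 1) := hxn ▸ hsum
    have : v x ≤ v (φ b) :=
      le_of_mul_le_mul_right hfin (zero_lt_iff.mpr (pow_ne_zero _ hvxne))
    exact hcon.not_ge this
  constructor
  · intro a ha
    exact hA' (φ a) (hAA' a ha)
  · intro γ hγ
    have hγ' : γ ∈ Subgroup.closure {g : Γˣ | (g : Γ) ∈ Set.range v} := by
      refine Subgroup.closure_mono ?_ hγ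
      rintro g ⟨b, hb⟩
      exact ⟨φ b, hb⟩
    obtain ⟨x, hx⟩ := hunb γ hγ'
    obtain ⟨b, hb⟩ := key x
    exact ⟨b, hx.trans hb⟩
end

section
/- Let B be a ring and let b, a_1, …, a_n ∈ B generate the unit ideal of B. Let v be a valuation on B with value group Γ such that v(a_i) ≤ v(b) ≠ 0 for all i, and let v' be the primary specialization of v associated with the convex subgroup cΓ_v. Then v(b) ∈ cΓ_v, so v'(b) = v(b) ≠ 0, and v'(a_i) ≤ v'(b) for all i. -/
/-!
If `v b < 1`, write `1 = ∑ rᵢ cᵢ` with `cᵢ ∈ {b, a₁, …, aₙ}`. Some term has `1 ≤ v (r c) ≤ v r · v b`,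
so `v r ≥ 1` lies in `cΓ_v`, and `(v r)⁻¹ ≤ v b < 1` puts `v b` into `cΓ_v` by convexity.
Once `v b ∈ cΓ_v`, the specialization keeps `v b` and can only lower `v (aᵢ)`.
-/

/-- A subgroup `Λ` of the units of `Γ` is *convex* if `γ ∈ Λ` whenever
`λ ≤ γ ≤ 1` or `1 ≤ γ ≤ λ` for some `λ ∈ Λ`. -/
def IsConvexSubgroup {Γ : Type*} [LinearOrderedCommGroupWithZero Γ] (Λ : Subgroup Γˣ) : Prop :=
  ∀ γ : Γˣ, (∃ l ∈ Λ, (((l : Γ) ≤ (γ : Γ) ∧ (γ : Γ) ≤ 1) ∨ ((1 : Γ) ≤ (γ : Γ) ∧ (γ : Γ) ≤ (l : Γ)))) →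
    γ ∈ Λ

/-- An element `g` of `Γ` lies in (the image with zero of) a subgroup `Λ` of `Γˣ`. -/
def MemWZ {Γ : Type*} [LinearOrderedCommGroupWithZero Γ] (Λ : Subgroup Γˣ) (g : Γ) : Prop :=
  ∃ u ∈ Λ, (u : Γ) = g

section ConvexSubgroup

variable {Γ : Type*} [LinearOrderedCommGroupWithZero Γ] {Λ : Subgroup Γˣ}

theorem MemWZ.inv {g : Γ} (hg : MemWZ Λ g) : MemWZ Λ g⁻¹ := by
  obtain ⟨u, hu, rfl⟩ := hg
  exact ⟨u⁻¹, inv_mem hu, Units.val_inv_eq_inv_val u⟩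

theorem IsConvexSubgroup.memWZ_of_le_of_le_one (hΛ : IsConvexSubgroup Λ) {g h : Γ}
    (hg : MemWZ Λ g) (hgh : g ≤ h) (h1 : h ≤ 1) : MemWZ Λ h := by
  obtain ⟨u, hu, rfl⟩ := hg
  have h0 : h ≠ 0 := (lt_of_lt_of_le (zero_lt_iff.mpr u.ne_zero) hgh).ne'
  exact ⟨Units.mk0 h h0, hΛ _ ⟨u, hu, Or.inl ⟨hgh, h1⟩⟩, rfl⟩

end ConvexSubgroup

namespace Valuation

variable {B Γ : Type*} [CommRing B] [LinearOrderedCommGroupWithZero Γ]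

theorem exists_one_le_map_mul_of_span_eq_top (v : Valuation B Γ) {s : Set B}
    (hs : Ideal.span s = ⊤) : ∃ x ∈ s, ∃ r, 1 ≤ v (r * x) := by
  by_contra! hlt
  have hspan : ∀ y ∈ Ideal.span s, ∀ r, v (r * y) < 1 := by
    intro y hy
    induction hy using Submodule.span_induction with
    | mem x hx => exact hlt x hx
    | zero => simp
    | add x y _ _ hx hy => exact fun r ↦ mul_add r x y ▸ v.map_add_lt (hx r) (hy r)
    | smul a x _ hx => exact fun r ↦ by simpa only [smul_eq_mul, mul_assoc] using hx (r * a)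
  simpa using hspan 1 (hs ▸ Submodule.mem_top) 1

theorem memWZ_of_span_eq_top (v : Valuation B Γ) {Λ : Subgroup Γˣ} (hΛ : IsConvexSubgroup Λ)
    (hc : ∀ x, 1 ≤ v x → MemWZ Λ (v x)) {s : Set B} (hs : Ideal.span s = ⊤) {b : B}
    (hle : ∀ x ∈ s, v x ≤ v b) : MemWZ Λ (v b) := by
  rcases le_or_gt 1 (v b) with h1b | hb1
  · exact hc b h1b
  obtain ⟨x, hx, r, hrx⟩ := v.exists_one_le_map_mul_of_span_eq_top hs
  have hrb : 1 ≤ v r * v b :=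
    hrx.trans (v.map_mul r x ▸ mul_le_mul_right (hle x hx) (v r))
  have hr : 1 ≤ v r := by
    by_contra! hr
    exact (mul_lt_one_of_lt_of_le hr hb1.le).not_ge hrb
  have hr_inv : (v r)⁻¹ ≤ v b :=
    (inv_le_iff_one_le_mul₀' (zero_lt_one.trans_le hr)).mpr hrb
  exact hΛ.memWZ_of_le_of_le_one (hc r hr).inv hr_inv hb1.le

def IsPrimarySpecialization (v v' : Valuation B Γ) (Λ : Subgroup Γˣ) : Prop :=
  ∀ x, (MemWZ Λ (v x) ∧ v' x = v x) ∨ (¬ MemWZ Λ (v x) ∧ v' x = 0)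

namespace IsPrimarySpecialization

variable {v v' : Valuation B Γ} {Λ : Subgroup Γˣ}

theorem map_eq_of_memWZ (hv' : IsPrimarySpecialization v v' Λ) {x : B} (hx : MemWZ Λ (v x)) :
    v' x = v x :=
  (hv' x).elim And.right fun h ↦ absurd hx h.1

theorem map_le (hv' : IsPrimarySpecialization v v' Λ) (x : B) : v' x ≤ v x := by
  rcases hv' x with ⟨-, h⟩ | ⟨-, h⟩ <;> rw [h]
  exact zero_le

end IsPrimarySpecialization

end Valuation

theorem stmt7_general {B : Type*} [CommRing B] {Γ : Type*} [LinearOrderedCommGroupWithZero Γ]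
    (v : Valuation B Γ) {n : ℕ} (b : B) (a : Fin n → B)
    (hspan : Ideal.span ({b} ∪ Set.range a) = ⊤)
    (hle : ∀ i, v (a i) ≤ v b) (hb : v b ≠ 0)
    (Λ₀ : Subgroup Γˣ) (hconv : IsConvexSubgroup Λ₀)
    (hc : ∀ x, 1 ≤ v x → MemWZ Λ₀ (v x))
    (v' : Valuation B Γ)
    (hv' : ∀ x, (MemWZ Λ₀ (v x) ∧ v' x = v x) ∨ (¬ MemWZ Λ₀ (v x) ∧ v' x = 0)) :
    MemWZ Λ₀ (v b) ∧ v' b = v b ∧ v' b ≠ 0 ∧ ∀ i, v' (a i) ≤ v' b := by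
  have hspec : v.IsPrimarySpecialization v' Λ₀ := hv'
  have hmem : MemWZ Λ₀ (v b) := by
    refine v.memWZ_of_span_eq_top hconv hc hspan ?_
    rintro _ (rfl | ⟨i, rfl⟩)
    exacts [le_rfl, hle i]
  have hvb : v' b = v b := hspec.map_eq_of_memWZ hmem
  exact ⟨hmem, hvb, hvb ▸ hb, fun i ↦ hvb ▸ (hspec.map_le (a i)).trans (hle i)⟩

/-- let `b, a_1, …, a_n` generate the unit ideal, let `v` be a valuation
with `v (a i) ≤ v b ≠ 0`, let `Λ₀ = cΓ_v` be the smallest convex subgroup containing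
`{v x : 1 ≤ v x}` and let `v'` be the primary specialization of `v` associated with `Λ₀`.
Then `v b ∈ cΓ_v`, so `v' b = v b ≠ 0`, and `v' (a i) ≤ v' b` for all `i`. -/
theorem stmt7 {B : Type*} [CommRing B] {Γ : Type*} [LinearOrderedCommGroupWithZero Γ]
    (v : Valuation B Γ) {n : ℕ} (b : B) (a : Fin n → B)
    (hspan : Ideal.span ({b} ∪ Set.range a) = ⊤)
    (hle : ∀ i, v (a i) ≤ v b) (hb : v b ≠ 0)
    (Λ₀ : Subgroup Γˣ) (hconv : IsConvexSubgroup Λ₀)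
    (hc : ∀ x, 1 ≤ v x → MemWZ Λ₀ (v x))
    (hmin : ∀ Λ' : Subgroup Γˣ, IsConvexSubgroup Λ' → (∀ x, 1 ≤ v x → MemWZ Λ' (v x)) → Λ₀ ≤ Λ')
    (v' : Valuation B Γ)
    (hv' : ∀ x, (MemWZ Λ₀ (v x) ∧ v' x = v x) ∨ (¬ MemWZ Λ₀ (v x) ∧ v' x = 0)) :
    MemWZ Λ₀ (v b) ∧ v' b = v b ∧ v' b ≠ 0 ∧ ∀ i, v' (a i) ≤ v' b :=
  stmt7_general v b a hspan hle hb Λ₀ hconv hc v' hv'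
end

section
/- Let A ⊆ B be rings (so that the inclusion A → B is injective). Then for every prime ideal q of A there exist a prime ideal p of B and a valuation subring R of the residue field k(p) with maximal ideal m, such that: the composite homomorphism Φ : A → B → k(p) has image contained in R; the canonical map B ⊗_A R → k(p) is surjective (i.e., the corresponding A-valuation on B is unbounded); and Φ⁻¹(m) = q. In other words, the map τ : Val(B,A) → Spec A sending an unbounded A-valuation (p, R, Φ) to Φ⁻¹(m) is surjective. -/
/-!
Lift a minimal prime of `A` below `q` to a prime `p₀` of `B`, and choose a valuation ring `V` of
`κ(p₀)` dominating `A_q`; its centre on `A` is `q`, but the `A`-valuation on `B` it defines may be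
bounded. Coarsen `V` to `W = V[Φ(B)]`, the smallest valuation ring containing the image of `B`,
let `p` be the centre of `W` on `B`, and let `R` be the image of `V` in `κ(W)`, restricted to
`κ(p) ⊆ κ(W)`. Since `m_W ⊆ m_V`, reduction modulo `m_W` detects membership in `V` and in `m_V`,
so the centre on `A` is still `q`. Unboundedness holds because every `Φ(s)` that is a unit of `W`
becomes the inverse of an element of `V` after multiplying by a suitable `Φ(d)`.
-/

open IsLocalRing

theorem Ideal.exists_isPrime_comap_le_of_injective {A B : Type*} [CommRing A] [CommRing B]
    {f : A →+* B} (hf : Function.Injective f) (q : Ideal A) [q.IsPrime] :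
    ∃ p : Ideal B, p.IsPrime ∧ p.comap f ≤ q := by
  obtain ⟨q₀, hq₀, hle⟩ := Ideal.exists_minimalPrimes_le (bot_le : ⊥ ≤ q)
  obtain ⟨p, hp, hpq₀⟩ := Ideal.exists_comap_eq_of_mem_minimalPrimes_of_injective hf q₀ hq₀
  exact ⟨p, hp, hpq₀.le.trans hle⟩

attribute [local instance] RingHom.ker_isPrime

noncomputable def RingHom.residueFieldKerLift {B L : Type*} [CommRing B] [Field L]
    (f : B →+* L) : (RingHom.ker f).ResidueField →+* L :=
  Ideal.ResidueField.lift _ f le_rfl fun _ hb => isUnit_iff_ne_zero.mpr hb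

@[simp]
theorem RingHom.residueFieldKerLift_algebraMap {B L : Type*} [CommRing B] [Field L]
    (f : B →+* L) (b : B) : f.residueFieldKerLift (algebraMap B _ b) = f b :=
  Ideal.ResidueField.lift_algebraMap _ _ _ _ _

namespace ValuationSubring

variable {K : Type*} [Field K]

theorem mem_nonunits_comap_iff {L : Type*} [Field L] (A : ValuationSubring L) (f : K →+* L)
    {x : K} : x ∈ (A.comap f).nonunits ↔ f x ∈ A.nonunits := by
  simp only [mem_nonunits_iff_or, mem_comap, map_inv₀, map_eq_zero]

theorem residue_eq_zero_iff_or (W : ValuationSubring K) (y : W) :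
    residue W y = 0 ↔ (y : K) = 0 ∨ (y : K)⁻¹ ∉ W := by
  rw [residue_eq_zero_iff, ← coe_mem_nonunits_iff, mem_nonunits_iff_or]

theorem residue_inv_of_inv_mem (W : ValuationSubring K) {y : W} (hy : (y : K)⁻¹ ∈ W) :
    (residue W y)⁻¹ = residue W ⟨(y : K)⁻¹, hy⟩ := by
  rcases eq_or_ne (y : K) 0 with hy0 | hy0
  · have hinv : (⟨(y : K)⁻¹, hy⟩ : W) = 0 := Subtype.ext (by simp [hy0])
    rw [hinv, show y = 0 from Subtype.ext hy0, map_zero, inv_zero]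
  · refine inv_eq_of_mul_eq_one_right ?_
    rw [← map_mul, show y * ⟨(y : K)⁻¹, hy⟩ = 1 from Subtype.ext (mul_inv_cancel₀ hy0), map_one]

theorem exists_centered_at {A : Type*} [CommRing A] (f : A →+* K) (q : Ideal A) [q.IsPrime]
    (hf : ∀ a ∉ q, f a ≠ 0) :
    ∃ V : ValuationSubring K, ∀ a, f a ∈ V ∧ (f a ∈ V.nonunits ↔ a ∈ q) := by
  let f' : Localization.AtPrime q →+* K :=
    IsLocalization.lift (M := q.primeCompl) fun a => isUnit_iff_ne_zero.mpr (hf a a.2)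
  have hf' (a : A) : f' (algebraMap A _ a) = f a := IsLocalization.lift_eq _ a
  obtain ⟨V, hV, _⟩ := IsLocalRing.exists_factor_valuationRing f'
  refine ⟨V, fun a => ⟨hf' a ▸ hV _, ?_⟩⟩
  rw [← hf', ← IsLocalization.AtPrime.to_map_mem_maximal_iff (Localization.AtPrime q) q,
    mem_maximalIdeal, _root_.mem_nonunits_iff, ← isUnit_map_iff (f'.codRestrict V.toSubring hV)]
  exact coe_mem_nonunits_iff (a := ⟨_, hV _⟩)

/-- The subring generated by `V` and `M`: a sum of products `v * m` has valuation at most that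
of one of the `m`. -/
def adjoinSubmonoid (V : ValuationSubring K) (M : Submonoid K) : ValuationSubring K :=
  ofLE V
    { carrier := {x | ∃ m ∈ M, V.valuation x ≤ V.valuation m}
      zero_mem' := ⟨1, M.one_mem, by simp⟩
      one_mem' := ⟨1, M.one_mem, le_rfl⟩
      add_mem' := by
        rintro x y ⟨m, hm, hxm⟩ ⟨n, hn, hyn⟩
        rcases le_total (V.valuation m) (V.valuation n) with h | h
        · exact ⟨n, hn, (V.valuation.map_add x y).trans (max_le (hxm.trans h) hyn)⟩
        · exact ⟨m, hm, (V.valuation.map_add x y).trans (max_le hxm (hyn.trans h))⟩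
      mul_mem' := by
        rintro x y ⟨m, hm, hxm⟩ ⟨n, hn, hyn⟩
        exact ⟨m * n, M.mul_mem hm hn, by simpa only [map_mul] using mul_le_mul' hxm hyn⟩
      neg_mem' := by
        rintro x ⟨m, hm, hxm⟩
        exact ⟨m, hm, by rwa [V.valuation.map_neg]⟩ }
    fun x hx => ⟨1, M.one_mem, V.valuation.map_one ▸ (V.valuation_le_one_iff x).mpr hx⟩

section adjoinSubmonoid

variable (V : ValuationSubring K) (M : Submonoid K)

theorem le_adjoinSubmonoid : V ≤ V.adjoinSubmonoid M :=
  fun x hx => ⟨1, M.one_mem, V.valuation.map_one ▸ (V.valuation_le_one_iff x).mpr hx⟩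

theorem mem_adjoinSubmonoid_of_mem {m : K} (hm : m ∈ M) : m ∈ V.adjoinSubmonoid M :=
  ⟨m, hm, le_rfl⟩

theorem exists_one_le_valuation_mul_of_inv_mem_adjoinSubmonoid {x : K} (hx0 : x ≠ 0)
    (hx : x⁻¹ ∈ V.adjoinSubmonoid M) : ∃ m ∈ M, 1 ≤ V.valuation (x * m) := by
  obtain ⟨m, hm, hxm⟩ := hx
  refine ⟨m, hm, ?_⟩
  have hvx : V.valuation x ≠ 0 := by simpa using hx0
  rw [map_inv₀] at hxm
  calc 1 = V.valuation x * (V.valuation x)⁻¹ := (mul_inv_cancel₀ hvx).symm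
    _ ≤ V.valuation x * V.valuation m := by gcongr
    _ = V.valuation (x * m) := (map_mul _ _ _).symm

end adjoinSubmonoid

section residueImage

variable (V W : ValuationSubring K) (h : V ≤ W)

noncomputable def residueImage : ValuationSubring (ResidueField W) :=
  ofSubring ((residue W).comp (V.inclusion W h)).range fun z => by
    obtain ⟨y, rfl⟩ := residue_surjective z
    rcases V.mem_or_inv_mem y with hy | hy
    · exact Or.inl ⟨⟨y, hy⟩, rfl⟩
    · exact Or.inr ⟨⟨_, hy⟩, (residue_inv_of_inv_mem W (h hy)).symm⟩

theorem residue_mem_residueImage_iff (y : W) :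
    residue W y ∈ V.residueImage W h ↔ (y : K) ∈ V := by
  refine ⟨fun ⟨v, hv⟩ => ?_, fun hy => ⟨⟨y, hy⟩, rfl⟩⟩
  have hyv : y - V.inclusion W h v ∈ maximalIdeal W := by
    rw [← residue_eq_zero_iff, map_sub, sub_eq_zero]
    exact hv.symm
  have : (y : K) - v ∈ V :=
    nonunits_subset (nonunits_le_nonunits.mpr h (coe_mem_nonunits_iff.mpr hyv))
  simpa using V.add_mem _ _ this v.2

theorem residue_mem_nonunits_residueImage_iff (y : W) :
    residue W y ∈ (V.residueImage W h).nonunits ↔ (y : K) ∈ V.nonunits := by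
  by_cases hy : y ∈ maximalIdeal W
  · rw [(residue_eq_zero_iff y).mpr hy]
    exact iff_of_true (V.residueImage W h).nonunits.zero_mem
      (nonunits_le_nonunits.mpr h (coe_mem_nonunits_iff.mpr hy))
  · rw [← coe_mem_nonunits_iff, mem_nonunits_iff_or, not_or, not_not] at hy
    rw [mem_nonunits_iff_or, mem_nonunits_iff_or, residue_inv_of_inv_mem W hy.2,
      residue_mem_residueImage_iff, residue_eq_zero_iff_or]
    simp [hy.1, hy.2]

end residueImage

section unbounded

variable {B : Type*} [CommRing B] (V : ValuationSubring K) (Φ : B →+* K)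

noncomputable def residueAdjoinRange :
    B →+* ResidueField (V.adjoinSubmonoid (MonoidHom.mrange Φ)) :=
  (residue _).comp (Φ.codRestrict (V.adjoinSubmonoid _).toSubring
    fun b => V.mem_adjoinSubmonoid_of_mem _ ⟨b, rfl⟩)

theorem residueAdjoinRange_eq_zero_iff (b : B) :
    V.residueAdjoinRange Φ b = 0 ↔ Φ b = 0 ∨ (Φ b)⁻¹ ∉ V.adjoinSubmonoid (MonoidHom.mrange Φ) :=
  residue_eq_zero_iff_or _ _

noncomputable abbrev unboundedPrime : Ideal B := RingHom.ker (V.residueAdjoinRange Φ)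

noncomputable def unboundedValuationSubring :
    ValuationSubring (V.unboundedPrime Φ).ResidueField :=
  (V.residueImage _ (V.le_adjoinSubmonoid _)).comap (V.residueAdjoinRange Φ).residueFieldKerLift

theorem algebraMap_mem_unboundedValuationSubring_iff (b : B) :
    algebraMap B _ b ∈ V.unboundedValuationSubring Φ ↔ Φ b ∈ V := by
  rw [unboundedValuationSubring, mem_comap, RingHom.residueFieldKerLift_algebraMap]
  exact residue_mem_residueImage_iff _ _ _ _

theorem algebraMap_mem_nonunits_unboundedValuationSubring_iff (b : B) :
    algebraMap B _ b ∈ (V.unboundedValuationSubring Φ).nonunits ↔ Φ b ∈ V.nonunits := by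
  rw [unboundedValuationSubring, mem_nonunits_comap_iff, RingHom.residueFieldKerLift_algebraMap]
  exact residue_mem_nonunits_residueImage_iff _ _ _ _

theorem inv_algebraMap_mem_unboundedValuationSubring {b : B} (hb : (Φ b)⁻¹ ∈ V) :
    (algebraMap B _ b)⁻¹ ∈ V.unboundedValuationSubring Φ := by
  rw [unboundedValuationSubring, mem_comap, map_inv₀, RingHom.residueFieldKerLift_algebraMap,
    residueAdjoinRange, RingHom.comp_apply, residue_inv_of_inv_mem _ (V.le_adjoinSubmonoid _ hb),
    residue_mem_residueImage_iff]
  exact hb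

theorem exists_eq_algebraMap_mul (x : (V.unboundedPrime Φ).ResidueField) :
    ∃ b, ∃ r ∈ V.unboundedValuationSubring Φ, x = algebraMap B _ b * r := by
  obtain ⟨b', s', hs', rfl⟩ := IsFractionRing.div_surjective (B ⧸ V.unboundedPrime Φ) x
  obtain ⟨b, rfl⟩ := Ideal.Quotient.mk_surjective b'
  obtain ⟨s, rfl⟩ := Ideal.Quotient.mk_surjective s'
  simp only [Ideal.algebraMap_quotient_residueField_mk]
  have hs : V.residueAdjoinRange Φ s ≠ 0 := by
    rw [Ne, ← RingHom.mem_ker, ← Ideal.Quotient.eq_zero_iff_mem]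
    exact nonZeroDivisors.ne_zero hs'
  rw [Ne, residueAdjoinRange_eq_zero_iff, not_or, not_not] at hs
  obtain ⟨_, ⟨d, rfl⟩, hd⟩ :=
    V.exists_one_le_valuation_mul_of_inv_mem_adjoinSubmonoid _ hs.1 hs.2
  rw [← map_mul] at hd
  have hsd : Φ (s * d) ≠ 0 := by
    intro h
    simp [h] at hd
  have hsd_inv : (Φ (s * d))⁻¹ ∈ V :=
    (V.valuation_le_one_iff _).mp ((V.valuation.one_le_val_iff hsd).mp hd)
  have hsd' : algebraMap B (V.unboundedPrime Φ).ResidueField (s * d) ≠ 0 := by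
    rw [Ne, Ideal.algebraMap_residueField_eq_zero, RingHom.mem_ker,
      residueAdjoinRange_eq_zero_iff, not_or, not_not]
    exact ⟨hsd, V.le_adjoinSubmonoid _ hsd_inv⟩
  refine ⟨b * d, _, V.inv_algebraMap_mem_unboundedValuationSubring Φ hsd_inv, ?_⟩
  rw [map_mul] at hsd'
  rw [map_mul, map_mul, ← div_eq_mul_inv, mul_div_mul_right _ _ (right_ne_zero_of_mul hsd')]

end unbounded

end ValuationSubring

/-- for `A ⊆ B` (so `Spec B → Spec A` is schematically dominant) the map
`τ : Val(B,A) → Spec A` is surjective: for every prime `q` of `A` there are a prime `p`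
of `B` and a valuation subring `R` of the residue field `k(p)` such that the composite
`Φ : A → B → k(p)` lands in `R`, the canonical map `B ⊗_A R → k(p)` is surjective
(i.e. the corresponding `A`-valuation on `B` is unbounded), and `Φ⁻¹(m_R) = q`.
Here `k(p)` is realized as the residue field of the localization `B_p`. -/
theorem stmt11 {B : Type*} [CommRing B] (A : Subring B) (q : Ideal A) (hq : q.IsPrime) :
    ∃ (p : PrimeSpectrum B)
      (R : ValuationSubring (IsLocalRing.ResidueField (Localization.AtPrime p.asIdeal))),
      (∀ a : A, ((IsLocalRing.residue (Localization.AtPrime p.asIdeal)).comp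
          (algebraMap B (Localization.AtPrime p.asIdeal))) (a : B) ∈ R) ∧
      (∀ x : IsLocalRing.ResidueField (Localization.AtPrime p.asIdeal),
        ∃ (m : ℕ) (c : Fin m → B)
          (r : Fin m → IsLocalRing.ResidueField (Localization.AtPrime p.asIdeal)),
          (∀ i, r i ∈ R) ∧
          x = ∑ i, ((IsLocalRing.residue (Localization.AtPrime p.asIdeal)).comp
            (algebraMap B (Localization.AtPrime p.asIdeal))) (c i) * r i) ∧
      (∀ (a : A) (ha : ((IsLocalRing.residue (Localization.AtPrime p.asIdeal)).comp
          (algebraMap B (Localization.AtPrime p.asIdeal))) (a : B) ∈ R),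
        (a ∈ q ↔ (⟨_, ha⟩ : R) ∈ IsLocalRing.maximalIdeal R)) := by
  obtain ⟨p₀, _, hp₀⟩ := Ideal.exists_isPrime_comap_le_of_injective A.subtype_injective q
  let Φ := algebraMap B p₀.ResidueField
  obtain ⟨V, hV⟩ := ValuationSubring.exists_centered_at (Φ.comp A.subtype) q fun a ha hΦa =>
    ha (hp₀ ((Ideal.algebraMap_residueField_eq_zero (I := p₀)).mp hΦa))
  refine ⟨⟨V.unboundedPrime Φ, inferInstance⟩, V.unboundedValuationSubring Φ,
    fun a => (V.algebraMap_mem_unboundedValuationSubring_iff Φ a).mpr (hV a).1,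
    fun x => ?_, fun a ha => ?_⟩
  · obtain ⟨b, r, hr, rfl⟩ := V.exists_eq_algebraMap_mul Φ x
    exact ⟨1, fun _ => b, fun _ => r, fun _ => hr, by rw [Fin.sum_univ_one]; rfl⟩
  · rw [← ValuationSubring.coe_mem_nonunits_iff, ← (hV a).2]
    exact (V.algebraMap_mem_nonunits_unboundedValuationSubring_iff Φ a).symm
end

section
/- Let A ⊆ B be rings, N ≥ 1, and for each i = 1, …, N let a_1^{(i)}, …, a_{n_i}^{(i)} ∈ B generate the unit ideal of B. Assume that for every unbounded A-valuation v on B there exists some i with v(a_j^{(i)}) ≤ v(a_1^{(i)}) for all j = 1, …, n_i. Let I = {(r_1,…,r_N) : 1 ≤ r_i ≤ n_i for all i}, let I' = {r ∈ I : r_i = 1 for some i}, and for r = (r_1,…,r_N) ∈ I set a_r = a_{r_1}^{(1)} · a_{r_2}^{(2)} ⋯ a_{r_N}^{(N)}. Then: (1) the family {a_r : r ∈ I'} generates the unit ideal of B; (2) for each r ∈ I', an unbounded A-valuation v satisfies v(a_s) ≤ v(a_r) for all s ∈ I' if and only if it satisfies v(a_s) ≤ v(a_r) for all s ∈ I; (3)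 every unbounded A-valuation v satisfies v(a_s) ≤ v(a_r) for all s ∈ I' for some r ∈ I'; (4) if r ∈ I' has r_i = 1 and v is an unbounded A-valuation with v(a_s) ≤ v(a_r) for all s ∈ I, then v(a_j^{(i)}) ≤ v(a_1^{(i)}) for all j = 1, …, n_i. -/
open Function

namespace Ideal

variable {B : Type*} [CommRing B]

lemma exists_notMem_of_span_range_eq_top {ι : Type*} {a : ι → B} (h : span (Set.range a) = ⊤)
    {I : Ideal B} (hI : I ≠ ⊤) : ∃ j, a j ∉ I := by
  by_contra! hmem
  exact hI (eq_top_iff.mpr (h ▸ span_le.mpr (Set.range_subset_iff.mpr hmem)))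

lemma span_prod_eq_top_of_forall_isMaximal {ι : Type*} [Fintype ι] [DecidableEq ι]
    {κ : ι → Type*} (a : (i : ι) → κ i → B) (j₀ : (i : ι) → κ i)
    (hgen : ∀ i, span (Set.range (a i)) = ⊤)
    (h : ∀ m : Ideal B, m.IsMaximal → ∃ i, a i (j₀ i) ∉ m) :
    span {x | ∃ r : (i : ι) → κ i, (∃ i, r i = j₀ i) ∧ x = ∏ i, a i (r i)} = ⊤ := by
  by_contra hne
  obtain ⟨m, hm, hle⟩ := exists_le_maximal _ hne
  obtain ⟨i, hi⟩ := h m hm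
  choose c hc using fun k => exists_notMem_of_span_range_eq_top (hgen k) hm.ne_top
  have hprod : ∏ k, a k (update c i (j₀ i) k) ∉ m := by
    rw [hm.isPrime.prod_mem_iff]
    rintro ⟨k, -, hk⟩
    rcases eq_or_ne k i with rfl | hki
    · exact hi (by simpa using hk)
    · exact hc k (by simpa [update_of_ne hki] using hk)
  exact hprod (hle (subset_span ⟨_, ⟨i, update_self ..⟩, rfl⟩))

end Ideal

namespace Valuation

variable {B : Type*} [CommRing B] {Γ : Type*} [LinearOrderedCommGroupWithZero Γ]

lemma exists_apply_ne_zero_of_span_range_eq_top {ι : Type*} (v : Valuation B Γ) {a : ι → B}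
    (h : Ideal.span (Set.range a) = ⊤) : ∃ j, v (a j) ≠ 0 := by
  have hsupp : v.supp ≠ ⊤ := v.supp.ne_top_iff_one.mpr (by simp)
  simpa only [mem_supp_iff] using Ideal.exists_notMem_of_span_range_eq_top h hsupp

lemma apply_ne_zero_of_forall_apply_le {ι : Type*} (v : Valuation B Γ) {a : ι → B}
    (h : Ideal.span (Set.range a) = ⊤) {j₀ : ι} (hj₀ : ∀ j, v (a j) ≤ v (a j₀)) :
    v (a j₀) ≠ 0 := by
  obtain ⟨j, hj⟩ := v.exists_apply_ne_zero_of_span_range_eq_top h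
  exact ((zero_lt_iff.mpr hj).trans_le (hj₀ j)).ne'

lemma valUnbounded_of_forall_eq_zero_or_eq_one (v : Valuation B Γ)
    (hv : ∀ b, v b = 0 ∨ v b = 1) : ValUnbounded v := by
  have hbot : Subgroup.closure {g : Γˣ | (g : Γ) ∈ Set.range v} = ⊥ := by
    refine Subgroup.closure_eq_bot_iff.mpr ?_
    rintro g ⟨b, hb⟩
    exact Units.ext (hb ▸ (hv b).resolve_left (hb ▸ g.ne_zero))
  intro γ hγ
  rw [hbot, Subgroup.mem_bot] at hγ
  exact ⟨1, by simp [hγ]⟩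

open Classical in
noncomputable def trivialAt (p : Ideal B) [p.IsPrime] : Valuation B Γ :=
  (1 : Valuation (B ⧸ p) Γ).comap (Ideal.Quotient.mk p)

variable (p : Ideal B) [p.IsPrime]

lemma trivialAt_apply_eq_zero_iff {b : B} : trivialAt (Γ := Γ) p b = 0 ↔ b ∈ p := by
  classical
  simp [trivialAt, Ideal.Quotient.eq_zero_iff_mem]

open Classical in
lemma trivialAt_apply_le_one (b : B) : trivialAt (Γ := Γ) p b ≤ 1 :=
  one_apply_le_one (Ideal.Quotient.mk p b)

lemma valUnbounded_trivialAt : ValUnbounded (trivialAt (Γ := Γ) p) := by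
  refine valUnbounded_of_forall_eq_zero_or_eq_one _ fun b => ?_
  classical
  simp only [trivialAt, comap_apply, one_apply_def]
  split_ifs <;> simp

section Products

variable {ι : Type*} [Fintype ι] {κ : ι → Type*} (v : Valuation B Γ)
    (a : (i : ι) → κ i → B)

lemma prod_le_prod_of_forall_le {s r : (i : ι) → κ i}
    (h : ∀ i, v (a i (s i)) ≤ v (a i (r i))) :
    v (∏ i, a i (s i)) ≤ v (∏ i, a i (r i)) := by
  simpa only [map_prod] using Finset.prod_le_prod' fun i _ => h i

lemma exists_prod_ne_zero (hgen : ∀ i, Ideal.span (Set.range (a i)) = ⊤) :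
    ∃ s : (i : ι) → κ i, v (∏ i, a i (s i)) ≠ 0 := by
  choose s hs using fun i => v.exists_apply_ne_zero_of_span_range_eq_top (hgen i)
  exact ⟨s, by simpa only [map_prod] using Finset.prod_ne_zero_iff.mpr fun i _ => hs i⟩

variable [DecidableEq ι]

lemma prod_le_prod_update {i : ι} {j₀ : κ i} (h : ∀ j, v (a i j) ≤ v (a i j₀))
    (s : (i : ι) → κ i) : v (∏ k, a k (s k)) ≤ v (∏ k, a k (update s i j₀ k)) := by
  refine v.prod_le_prod_of_forall_le a fun k => ?_
  rcases eq_or_ne k i with rfl | hk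
  · simpa using h (s k)
  · simp [update_of_ne hk]

lemma apply_le_of_prod_update_le {r : (i : ι) → κ i} {i : ι} {j : κ i}
    (hr : v (∏ k, a k (r k)) ≠ 0)
    (h : v (∏ k, a k (update r i j k)) ≤ v (∏ k, a k (r k))) :
    v (a i j) ≤ v (a i (r i)) := by
  have hsplit (s : (i : ι) → κ i) :
      ∏ k, a k (s k) = a i (s i) * ∏ k ∈ Finset.univ.erase i, a k (s k) :=
    (Finset.mul_prod_erase _ _ (Finset.mem_univ i)).symm
  have hrest : ∏ k ∈ Finset.univ.erase i, a k (update r i j k) =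
      ∏ k ∈ Finset.univ.erase i, a k (r k) :=
    Finset.prod_congr rfl fun k hk => by rw [update_of_ne (Finset.ne_of_mem_erase hk)]
  rw [hsplit, hsplit r, hrest, update_self, map_mul, map_mul] at h
  rw [hsplit, map_mul] at hr
  exact (mul_le_mul_iff_left₀ (zero_lt_iff.mpr (right_ne_zero_of_mul hr))).mp h

lemma apply_le_of_forall_prod_le (hgen : ∀ i, Ideal.span (Set.range (a i)) = ⊤)
    {r : (i : ι) → κ i}
    (hr : ∀ s : (i : ι) → κ i, v (∏ k, a k (s k)) ≤ v (∏ k, a k (r k)))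
    (i : ι) (j : κ i) : v (a i j) ≤ v (a i (r i)) := by
  obtain ⟨s, hs⟩ := v.exists_prod_ne_zero a hgen
  exact v.apply_le_of_prod_update_le a ((zero_lt_iff.mpr hs).trans_le (hr s)).ne' (hr _)

lemma exists_forall_prod_le [∀ i, Finite (κ i)] [∀ i, Nonempty (κ i)] {i : ι} {j₀ : κ i}
    (h : ∀ j, v (a i j) ≤ v (a i j₀)) :
    ∃ r : (i : ι) → κ i, r i = j₀ ∧
      ∀ s : (i : ι) → κ i, v (∏ k, a k (s k)) ≤ v (∏ k, a k (r k)) := by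
  choose c hc using fun k => Finite.exists_max fun j => v (a k j)
  refine ⟨update c i j₀, update_self .., fun s => ?_⟩
  exact (v.prod_le_prod_of_forall_le a fun k => hc k (s k)).trans (v.prod_le_prod_update a h c)

end Products

end Valuation

open Valuation

/-- Indices start at `0`: `a i ⟨0, hn i⟩` is the paper's `a_1^{(i)}`. -/
theorem stmt13_general {B : Type*} [CommRing B] {Γ : Type*} [LinearOrderedCommGroupWithZero Γ]
    (A : Subring B) (N : ℕ) (n : Fin N → ℕ) (hn : ∀ i, 0 < n i)
    (a : (i : Fin N) → Fin (n i) → B)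
    (hgen : ∀ i, Ideal.span (Set.range (a i)) = ⊤)
    (hcov : ∀ v : Valuation B Γ, ValUnbounded v → (∀ x ∈ A, v x ≤ 1) →
      ∃ i, ∀ j, v (a i j) ≤ v (a i ⟨0, hn i⟩)) :
    -- (1) the products indexed by I' generate the unit ideal
    (Ideal.span {x : B | ∃ r : (i : Fin N) → Fin (n i),
        (∃ i, r i = ⟨0, hn i⟩) ∧ x = ∏ i, a i (r i)} = ⊤) ∧
    -- (2) for r ∈ I', testing against I' is the same as testing against I
    (∀ r : (i : Fin N) → Fin (n i), (∃ i, r i = ⟨0, hn i⟩) →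
      ∀ v : Valuation B Γ, ValUnbounded v → (∀ x ∈ A, v x ≤ 1) →
      ((∀ s : (i : Fin N) → Fin (n i), (∃ i, s i = ⟨0, hn i⟩) →
          v (∏ i, a i (s i)) ≤ v (∏ i, a i (r i))) ↔
        (∀ s : (i : Fin N) → Fin (n i), v (∏ i, a i (s i)) ≤ v (∏ i, a i (r i))))) ∧
    -- (3) the rational domains indexed by I' cover Val(B,A)
    (∀ v : Valuation B Γ, ValUnbounded v → (∀ x ∈ A, v x ≤ 1) →
      ∃ r : (i : Fin N) → Fin (n i), (∃ i, r i = ⟨0, hn i⟩) ∧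
        ∀ s : (i : Fin N) → Fin (n i), (∃ i, s i = ⟨0, hn i⟩) →
          v (∏ i, a i (s i)) ≤ v (∏ i, a i (r i))) ∧
    -- (4) the refinement property
    (∀ r : (i : Fin N) → Fin (n i), ∀ i : Fin N, r i = ⟨0, hn i⟩ →
      ∀ v : Valuation B Γ, ValUnbounded v → (∀ x ∈ A, v x ≤ 1) →
      (∀ s : (i : Fin N) → Fin (n i), v (∏ k, a k (s k)) ≤ v (∏ k, a k (r k))) →
      ∀ j, v (a i j) ≤ v (a i ⟨0, hn i⟩)) := by
  have (i : Fin N) : Nonempty (Fin (n i)) := Fin.pos_iff_nonempty.mp (hn i)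
  refine ⟨Ideal.span_prod_eq_top_of_forall_isMaximal a _ hgen fun m _ => ?_, ?_, ?_, ?_⟩
  · obtain ⟨i, hi⟩ := hcov (trivialAt m) (valUnbounded_trivialAt m) fun x _ =>
      trivialAt_apply_le_one m x
    exact ⟨i, (trivialAt_apply_eq_zero_iff m).not.mp
      ((trivialAt m).apply_ne_zero_of_forall_apply_le (hgen i) hi)⟩
  · intro r _ v hv hA
    obtain ⟨i, hi⟩ := hcov v hv hA
    exact ⟨fun h s => (v.prod_le_prod_update a hi s).trans (h _ ⟨i, update_self ..⟩),
      fun h s _ => h s⟩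
  · intro v hv hA
    obtain ⟨i, hi⟩ := hcov v hv hA
    obtain ⟨r, hri, hr⟩ := v.exists_forall_prod_le a hi
    exact ⟨r, ⟨i, hri⟩, fun s _ => hr s⟩
  · rintro r i hri v - - hr j
    exact hri ▸ v.apply_le_of_forall_prod_le a hgen hr i j

/-- refinement of a finite cover of `Val(B,A)` by rational domains to a
rational covering.  For each `i`, `a i 0, …, a i (n i - 1)` generate the unit ideal
(the distinguished first element is `a i ⟨0, hn i⟩`), and the rational domains
`{v : ∀ j, v (a i j) ≤ v (a i 0)}` cover `Val(B,A)`.  With `a_r = ∏ i, a i (r i)` and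
`I' = {r : ∃ i, r i = 0}`, the conclusions (1)–(4) hold. -/
theorem stmt13 {B : Type*} [CommRing B] {Γ : Type*} [LinearOrderedCommGroupWithZero Γ]
    (A : Subring B) (N : ℕ) (hN : 1 ≤ N) (n : Fin N → ℕ) (hn : ∀ i, 0 < n i)
    (a : (i : Fin N) → Fin (n i) → B)
    (hgen : ∀ i, Ideal.span (Set.range (a i)) = ⊤)
    (hcov : ∀ v : Valuation B Γ, ValUnbounded v → (∀ x ∈ A, v x ≤ 1) →
      ∃ i, ∀ j, v (a i j) ≤ v (a i ⟨0, hn i⟩)) :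
    -- (1) the products indexed by I' generate the unit ideal
    (Ideal.span {x : B | ∃ r : (i : Fin N) → Fin (n i),
        (∃ i, r i = ⟨0, hn i⟩) ∧ x = ∏ i, a i (r i)} = ⊤) ∧
    -- (2) for r ∈ I', testing against I' is the same as testing against I
    (∀ r : (i : Fin N) → Fin (n i), (∃ i, r i = ⟨0, hn i⟩) →
      ∀ v : Valuation B Γ, ValUnbounded v → (∀ x ∈ A, v x ≤ 1) →
      ((∀ s : (i : Fin N) → Fin (n i), (∃ i, s i = ⟨0, hn i⟩) →
          v (∏ i, a i (s i)) ≤ v (∏ i, a i (r i))) ↔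
        (∀ s : (i : Fin N) → Fin (n i), v (∏ i, a i (s i)) ≤ v (∏ i, a i (r i))))) ∧
    -- (3) the rational domains indexed by I' cover Val(B,A)
    (∀ v : Valuation B Γ, ValUnbounded v → (∀ x ∈ A, v x ≤ 1) →
      ∃ r : (i : Fin N) → Fin (n i), (∃ i, r i = ⟨0, hn i⟩) ∧
        ∀ s : (i : Fin N) → Fin (n i), (∃ i, s i = ⟨0, hn i⟩) →
          v (∏ i, a i (s i)) ≤ v (∏ i, a i (r i))) ∧
    -- (4) the refinement property
    (∀ r : (i : Fin N) → Fin (n i), ∀ i : Fin N, r i = ⟨0, hn i⟩ →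
      ∀ v : Valuation B Γ, ValUnbounded v → (∀ x ∈ A, v x ≤ 1) →
      (∀ s : (i : Fin N) → Fin (n i), v (∏ k, a k (s k)) ≤ v (∏ k, a k (r k))) →
      ∀ j, v (a i j) ≤ v (a i ⟨0, hn i⟩)) :=
  stmt13_general A N n hn a hgen hcov
end

section
/- Let A ⊆ B be rings and let b, a_1, …, a_n ∈ B generate the unit ideal of B. Let φ_b : B → B_b be the localization map and let A' be the subring of B_b generated by φ_b(A) together with the elements a_1/b, …, a_n/b. Then the induced ring homomorphism B ⊗_A A' → B_b is surjective; in particular it is integral, so the homomorphism of pairs of rings (B, A) → (B_b, A') is adic. -/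
/-!
Writing `1 = c * b + ∑ dᵢ * aᵢ` gives `1 / b = c + ∑ dᵢ * (aᵢ / b)`, so `1 / b` lies in the
`B`-subalgebra generated by `A'`, which is therefore all of `B_b`. As `A'` is closed under
multiplication, that subalgebra is just the `B`-span of `A'`.
-/

namespace IsLocalization.Away

variable {R S : Type*} [CommRing R] [CommRing S] [Algebra R S] (b : R) [IsLocalization.Away b S]

theorem subalgebra_eq_top_of_invSelf_mem {T : Subalgebra R S} (h : invSelf b ∈ T) : T = ⊤ := by
  refine eq_top_iff.2 fun x _ ↦ ?_
  obtain ⟨n, r, hx⟩ := surj b x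
  have hx' : x = algebraMap R S r * invSelf b ^ n := by
    rw [← hx, mul_assoc, ← mul_pow, mul_invSelf, one_pow, mul_one]
  exact hx' ▸ mul_mem (T.algebraMap_mem r) (pow_mem h n)

theorem invSelf_mem_adjoin_of_span_insert_eq_top {s : Set R}
    (hspan : Ideal.span (insert b s) = ⊤) :
    invSelf b ∈ Algebra.adjoin R ((fun x ↦ algebraMap R S x * invSelf b) '' s) := by
  set T := Algebra.adjoin R ((fun x ↦ algebraMap R S x * invSelf b) '' s)
  obtain ⟨c, z, hz, hcz⟩ := Ideal.mem_span_insert.1 (hspan ▸ Submodule.mem_top (x := (1 : R)))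
  have hz' : algebraMap R S z * invSelf b ∈ T := by
    -- the ideal `{z | z / b ∈ T}`, which contains `s`
    let I : Ideal R := (Subalgebra.toSubmodule T).comap
      ((LinearMap.mulRight R (invSelf b)).comp (Algebra.linearMap R S))
    have hsI : Ideal.span s ≤ I :=
      Ideal.span_le.2 fun x hx ↦ Algebra.subset_adjoin ⟨x, hx, rfl⟩
    exact hsI hz
  have hinv : invSelf b = algebraMap R S c + algebraMap R S z * invSelf b := by
    calc invSelf b = algebraMap R S (c * b + z) * invSelf b := by rw [← hcz, map_one, one_mul]
      _ = algebraMap R S c * (algebraMap R S b * invSelf b) + algebraMap R S z * invSelf b := by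
        rw [map_add, map_mul]; ring
      _ = _ := by rw [mul_invSelf, mul_one]
  exact hinv ▸ add_mem (T.algebraMap_mem c) hz'

end IsLocalization.Away

theorem Submonoid.toSubmodule_adjoin_eq_span {R A : Type*} [CommSemiring R] [Semiring A]
    [Algebra R A] (M : Submonoid A) :
    Subalgebra.toSubmodule (Algebra.adjoin R (M : Set A)) = Submodule.span R M := by
  rw [Algebra.adjoin_eq_span, Submonoid.closure_eq]

/-- let `b, a_1, …, a_n ∈ B` generate the unit ideal, let `φ_b : B → B_b`
be the localization map and let `A'` be the subring of `B_b` generated by `φ_b(A)` and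
the elements `a i / b`.  Then the induced map `B ⊗_A A' → B_b`, `x ⊗ a' ↦ φ_b x * a'`,
is surjective (every element of `B_b` is a finite sum `∑ φ_b (c i) * s i` with
`s i ∈ A'`); in particular, every element of `B_b` is integral over the image of
`B ⊗_A A' → B_b` (the subring generated by `φ_b(B)` and `A'`), i.e. the homomorphism of
pairs `(B, A) → (B_b, A')` is adic. -/
theorem stmt16 {B : Type*} [CommRing B] (A : Subring B) {n : ℕ} (b : B) (a : Fin n → B)
    (hspan : Ideal.span ({b} ∪ Set.range a) = ⊤)
    (A' : Subring (Localization.Away b))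
    (hA' : A' = Subring.closure
      ((algebraMap B (Localization.Away b)) '' (A : Set B) ∪
        Set.range fun i =>
          algebraMap B (Localization.Away b) (a i) * IsLocalization.Away.invSelf b)) :
    (∀ x : Localization.Away b, ∃ (m : ℕ) (c : Fin m → B) (s : Fin m → Localization.Away b),
      (∀ i, s i ∈ A') ∧ x = ∑ i, algebraMap B (Localization.Away b) (c i) * s i) ∧
    (∀ x : Localization.Away b,
      IsIntegral (Subring.closure (Set.range (algebraMap B (Localization.Away b)) ∪
        (A' : Set (Localization.Away b)))) x) := by
  have hadjoin : Algebra.adjoin B (A' : Set (Localization.Away b)) = ⊤ := by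
    refine IsLocalization.Away.subalgebra_eq_top_of_invSelf_mem b (Algebra.adjoin_mono ?_
      (IsLocalization.Away.invSelf_mem_adjoin_of_span_insert_eq_top b (s := Set.range a)
        (by rwa [← Set.singleton_union])))
    rintro _ ⟨_, ⟨i, rfl⟩, rfl⟩
    exact hA' ▸ Subring.subset_closure (Or.inr ⟨i, rfl⟩)
  refine ⟨fun x ↦ ?_, fun x ↦ ?_⟩
  · have hx : x ∈ Submodule.span B (A'.toSubmonoid : Set (Localization.Away b)) := by
      rw [← Submonoid.toSubmodule_adjoin_eq_span, Subring.coe_toSubmonoid, hadjoin,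
        Algebra.top_toSubmodule]
      exact Submodule.mem_top
    obtain ⟨m, c, s, hcs⟩ := Submodule.mem_span_set'.1 hx
    exact ⟨m, c, fun i ↦ s i, fun i ↦ (s i).2, by simp only [← hcs, Algebra.smul_def]⟩
  · have hclosure : Subring.closure (Set.range (algebraMap B (Localization.Away b)) ∪
        (A' : Set (Localization.Away b))) = ⊤ := by
      rw [← Algebra.adjoin_eq_ring_closure, hadjoin, Algebra.top_toSubring]
    exact isIntegral_algebraMap (R := Subring.closure _)
      (x := ⟨x, hclosure ▸ Subring.mem_top x⟩)
end

section
/- Let A ⊆ B and A' ⊆ B' be rings and let φ : B → B' be a ring homomorphism with φ(A) ⊆ A'. Let v be a valuation on B' with kernel p, valuation ring R_v ⊆ k(p), and semi-valuation ring S_v ⊆ B'_p, and let w = v ∘ φ, with kernel φ⁻¹(p), valuation ring R_w ⊆ k(φ⁻¹(p)), and semi-valuation ring S_w ⊆ B_{φ⁻¹(p)}. Then R_w = R_v ∩ k(φ⁻¹(p)) (intersection inside k(p) via the induced embedding k(φ⁻¹(p)) → k(p)), and the canonical homomorphism B_{φ⁻¹(p)} → B'_p maps S_w into S_v, the induced homomorphism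 S_w → S_v being a local homomorphism of local rings. -/
/-! Let `vₚ`, `w_q` be the extensions of `v` and `w = v ∘ φ` to `B'_p` and `B_{φ⁻¹ p}`.
Since `g (a / s) = φ a / φ s`, we get `vₚ ∘ g = w_q`, which gives both claims about
`S_w → S_v`. As `vₚ` kills the maximal ideal of `B'_p`, whether `vₚ y ≤ 1` depends only on
the residue class of `y`; so `R_v` is exactly the set of residues of such `y`, likewise for
`R_w`, and `R_w = ι⁻¹ R_v` follows from `vₚ ∘ g = w_q` and `ι ∘ residue = residue ∘ g`. -/

namespace Valuation

variable {Γ : Type*} [LinearOrderedCommGroupWithZero Γ]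

theorem supp_extendToLocalization_atPrime {R : Type*} [CommRing R] (v : Valuation R Γ) :
    (v.extendToLocalization le_rfl (Localization.AtPrime v.supp)).supp =
      IsLocalRing.maximalIdeal (Localization.AtPrime v.supp) := by
  ext y
  obtain ⟨⟨a, s⟩, rfl⟩ := IsLocalization.mk'_surjective v.supp.primeCompl y
  have hs : v s ≠ 0 := s.2
  rw [mem_supp_iff, extendToLocalization_mk', IsLocalization.AtPrime.mk'_mem_maximal_iff _ v.supp,
    mem_supp_iff]
  simp [hs]

theorem extendToLocalization_localRingHom {R R' : Type*} [CommRing R] [CommRing R']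
    (v : Valuation R' Γ) (φ : R →+* R') (x : Localization.AtPrime (v.comap φ).supp) :
    v.extendToLocalization le_rfl (Localization.AtPrime v.supp)
        (Localization.localRingHom _ _ φ (v.comap_supp φ) x) =
      (v.comap φ).extendToLocalization le_rfl (Localization.AtPrime (v.comap φ).supp) x := by
  obtain ⟨⟨a, s⟩, rfl⟩ := IsLocalization.mk'_surjective (v.comap φ).supp.primeCompl x
  rw [Localization.localRingHom_mk', extendToLocalization_mk', extendToLocalization_mk']
  rfl

theorem residue_mem_map_integer_iff {R : Type*} [CommRing R] [IsLocalRing R]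
    (u : Valuation R Γ) (hu : IsLocalRing.maximalIdeal R ≤ u.supp) (y : R) :
    IsLocalRing.residue R y ∈ u.integer.map (IsLocalRing.residue R) ↔ u y ≤ 1 := by
  refine ⟨?_, fun hy => ⟨y, hy, rfl⟩⟩
  rintro ⟨x, hx, hxy⟩
  have hyx : y - x ∈ u.supp := hu (Ideal.Quotient.eq.mp hxy.symm)
  calc u y = u (x + (y - x)) := by rw [add_sub_cancel]
    _ = u x := u.map_add_supp x hyx
    _ ≤ 1 := hx

end Valuation

theorem stmt18_general {B B' : Type*} [CommRing B] [CommRing B'] {Γ : Type*}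
    [LinearOrderedCommGroupWithZero Γ]
    (φ : B →+* B')
    (v : Valuation B' Γ) :
    letI w : Valuation B Γ := v.comap φ
    letI g : Localization.AtPrime w.supp →+* Localization.AtPrime v.supp :=
      Localization.localRingHom w.supp v.supp φ (Valuation.comap_supp v φ)
    letI vp := v.extendToLocalization le_rfl (Localization.AtPrime v.supp)
    letI wq := w.extendToLocalization le_rfl (Localization.AtPrime w.supp)
    letI hloc : IsLocalHom g :=
      Localization.isLocalHom_localRingHom _ _ _ (Valuation.comap_supp v φ)
    letI ι : IsLocalRing.ResidueField (Localization.AtPrime w.supp) →+*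
        IsLocalRing.ResidueField (Localization.AtPrime v.supp) :=
      IsLocalRing.ResidueField.map g
    -- R_w = R_v ∩ k(φ⁻¹ p)
    (Subring.map (IsLocalRing.residue (Localization.AtPrime w.supp)) wq.integer
      = Subring.comap ι
          (Subring.map (IsLocalRing.residue (Localization.AtPrime v.supp)) vp.integer)) ∧
    -- g maps S_w into S_v
    (∀ x : Localization.AtPrime w.supp, wq x ≤ 1 → vp (g x) ≤ 1) ∧
    -- and S_w → S_v is a local homomorphism
    (∀ x : Localization.AtPrime w.supp, wq x < 1 → vp (g x) < 1) := by
  have hvg := Valuation.extendToLocalization_localRingHom v φ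
  refine ⟨?_, fun x hx => (hvg x).trans_le hx, fun x hx => (hvg x).trans_lt hx⟩
  ext z
  obtain ⟨x, rfl⟩ := IsLocalRing.residue_surjective z
  rw [Subring.mem_comap, IsLocalRing.ResidueField.map_residue,
    Valuation.residue_mem_map_integer_iff _
      (Valuation.supp_extendToLocalization_atPrime _).ge,
    Valuation.residue_mem_map_integer_iff _
      (Valuation.supp_extendToLocalization_atPrime v).ge, hvg]

/-- pullback of semi-valuation rings.  Let `φ : B → B'` map `A` into `A'`,
let `v` be a valuation on `B'` with kernel `p = supp v`, valuation ring
`R_v ⊆ k(p)` and semi-valuation ring `S_v ⊆ B'_p`, and let `w = v ∘ φ`, with kernel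
`φ⁻¹(p) = supp w`, valuation ring `R_w ⊆ k(φ⁻¹ p)` and semi-valuation ring
`S_w ⊆ B_{φ⁻¹ p}`.  Then, with `g : B_{φ⁻¹ p} → B'_p` the canonical homomorphism and
`ι : k(φ⁻¹ p) → k(p)` the induced embedding of residue fields,
`R_w = R_v ∩ k(φ⁻¹ p)` (i.e. `R_w = ι⁻¹(R_v)`), `g` maps `S_w` into `S_v`, and the
induced homomorphism `S_w → S_v` is local. -/
theorem stmt18 {B B' : Type*} [CommRing B] [CommRing B'] {Γ : Type*}
    [LinearOrderedCommGroupWithZero Γ]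
    (A : Subring B) (A' : Subring B') (φ : B →+* B') (hAA' : ∀ a ∈ A, φ a ∈ A')
    (v : Valuation B' Γ) (hA' : ∀ a ∈ A', v a ≤ 1) :
    letI w : Valuation B Γ := v.comap φ
    letI g : Localization.AtPrime w.supp →+* Localization.AtPrime v.supp :=
      Localization.localRingHom w.supp v.supp φ (Valuation.comap_supp v φ)
    letI vp := v.extendToLocalization le_rfl (Localization.AtPrime v.supp)
    letI wq := w.extendToLocalization le_rfl (Localization.AtPrime w.supp)
    letI hloc : IsLocalHom g :=
      Localization.isLocalHom_localRingHom _ _ _ (Valuation.comap_supp v φ)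
    letI ι : IsLocalRing.ResidueField (Localization.AtPrime w.supp) →+*
        IsLocalRing.ResidueField (Localization.AtPrime v.supp) :=
      IsLocalRing.ResidueField.map g
    -- R_w = R_v ∩ k(φ⁻¹ p)
    (Subring.map (IsLocalRing.residue (Localization.AtPrime w.supp)) wq.integer
      = Subring.comap ι
          (Subring.map (IsLocalRing.residue (Localization.AtPrime v.supp)) vp.integer)) ∧
    -- g maps S_w into S_v
    (∀ x : Localization.AtPrime w.supp, wq x ≤ 1 → vp (g x) ≤ 1) ∧
    -- and S_w → S_v is a local homomorphism
    (∀ x : Localization.AtPrime w.supp, wq x < 1 → vp (g x) < 1) :=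
  stmt18_general φ v
end
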